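/- arXiv:math/0503368 — 2 statements merged into one kernel-verified Lean document; each statement's English description precedes it below -/
import Mathlib

section
/- Let T be a tree with root v₀. Every tuple (j_w)_{w∈T^∞} ∈ ℤ^{T^∞} extends uniquely to a tuple (j_v)_{v∈T} ∈ ℤ^T satisfying j_v = j_{(v,1)} − j_{(v,2)} + j_{(v,3)} for every non-terminal node v. Let B = {v₀} ∪ {(v,i) : v ∈ T⁰, i ∈ {1,3}}; then |B| = |T^∞|, and the ℤ-linear map L : ℤ^{T^∞} → ℤ^B sending (j_w)_{w∈T^∞} to the tuple consisting of j_{v₀} together with the differences k_{v,i} = j_v − j_{(v,i)} for v ∈ T⁰ and i ∈ {1,3} (computed from the unique extension) is a bijection. -/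
/-- A tree in the sense of Christ's paper: a finite partially ordered set with a
unique maximal element (the root), in which any two elements lying between two
comparable elements are comparable, and every node has either exactly three
(labeled) children or none. -/
structure Tree3 where
  V : Type
  [fin : Fintype V]
  [po : PartialOrder V]
  [deq : DecidableEq V]
  isTerminal : V → Prop
  [decTerm : DecidablePred isTerminal]
  root : V
  le_root : ∀ v : V, v ≤ root
  chainCond : ∀ v1 v2 v3 v4 : V,
    v4 ≤ v2 → v2 ≤ v1 → v4 ≤ v3 → v3 ≤ v1 → v2 ≤ v3 ∨ v3 ≤ v2
  child : V → Fin 3 → V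
  child_covby : ∀ v : V, ¬ isTerminal v → ∀ i : Fin 3, child v i ⋖ v
  child_inj : ∀ v : V, ¬ isTerminal v → Function.Injective (child v)
  covby_child : ∀ v w : V, ¬ isTerminal v → w ⋖ v → ∃ i : Fin 3, w = child v i
  terminal_min : ∀ v : V, isTerminal v → ∀ w : V, ¬ w < v

attribute [instance] Tree3.fin Tree3.po Tree3.deq Tree3.decTerm

open MeasureTheory

namespace Tree3

variable (T : Tree3)

/-- The set `T⁰` of non-terminal nodes. -/
abbrev T0 : Type := {v : T.V // ¬ T.isTerminal v}

/-- The set `T^∞` of terminal nodes. -/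
abbrev Tinf : Type := {v : T.V // T.isTerminal v}

/-- `σ_v(j) = j_v² − j_{(v,1)}² + j_{(v,2)}² − j_{(v,3)}²` for non-terminal `v`, else `0`. -/
def sigmaJ (j : T.V → ℤ) (v : T.V) : ℤ :=
  if T.isTerminal v then 0
  else j v ^ 2 - j (T.child v 0) ^ 2 + j (T.child v 1) ^ 2 - j (T.child v 2) ^ 2

/-- The region `R(T,t) = {(t_u)_{u∈T⁰} : 0 ≤ t_u ≤ t_{u'} ≤ t whenever u ≤ u'}`. -/
def RSet (t : ℝ) : Set (T.T0 → ℝ) :=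
  {f | ∀ u u' : T.T0, u.1 ≤ u'.1 → 0 ≤ f u ∧ f u ≤ f u' ∧ f u' ≤ t}

/-- The tree coefficient `I_T(t,j) = ∫_{R(T,t)} ∏_{u∈T⁰} e^{±_u i ω σ_u(j) t_u} dt_u`. -/
noncomputable def treeCoeff (pm : T.V → ℤ) (ω : ℤ) (j : T.V → ℤ) (t : ℝ) : ℂ :=
  ∫ f in T.RSet t,
    ∏ u : T.T0,
      Complex.exp ((pm u.1 : ℂ) * Complex.I * (ω : ℂ) * (T.sigmaJ j u.1 : ℂ) * (f u : ℂ))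

/-- The linear ("cyclicity") relations `j_v = j_{(v,1)} − j_{(v,2)} + j_{(v,3)}`. -/
def cyc (j : T.V → ℤ) : Prop :=
  ∀ v : T.V, ¬ T.isTerminal v →
    j v = j (T.child v 0) - j (T.child v 1) + j (T.child v 2)

/-- Membership in `J(T)`, where `isSimple` designates the simple (non-general)
non-terminal nodes. -/
def memJ (isSimple : T.V → Prop) (j : T.V → ℤ) : Prop :=
  T.cyc j ∧
  (∀ v : T.V, ¬ T.isTerminal v → ¬ isSimple v →
    ({j v, j (T.child v 1)} : Set ℤ) ∩ {j (T.child v 0), j (T.child v 2)} = ∅) ∧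
  (∀ v : T.V, ¬ T.isTerminal v → isSimple v → ∀ i : Fin 3, j (T.child v i) = j v)

/-- `ρ`, defined recursively by `ρ_v = 0` for terminal `v` and
`ρ_v = σ_v + Σᵢ ε_{v,i} ρ_{(v,i)}` for non-terminal `v`. -/
noncomputable def rho (eps : T.V → Fin 3 → ℤ) (j : T.V → ℤ) : T.V → ℤ :=
  (wellFounded_lt (α := T.V)).fix fun v ih =>
    if h : T.isTerminal v then 0
    else T.sigmaJ j v + ∑ i : Fin 3, eps v i * ih (T.child v i) ((T.child_covby v h i).lt)

/-- The unique extension of a tuple indexed by terminal nodes to a tuple indexed by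
all nodes satisfying the relations `j_v = j_{(v,1)} − j_{(v,2)} + j_{(v,3)}`. -/
noncomputable def extCoeff (f : T.Tinf → ℤ) : T.V → ℤ :=
  (wellFounded_lt (α := T.V)).fix fun v ih =>
    if h : T.isTerminal v then f ⟨v, h⟩
    else ih (T.child v 0) ((T.child_covby v h 0).lt)
       - ih (T.child v 1) ((T.child_covby v h 1).lt)
       + ih (T.child v 2) ((T.child_covby v h 2).lt)

/-! ### Auxiliary lemmas -/

lemma extCoeff_eq (f : T.Tinf → ℤ) (v : T.V) :
    T.extCoeff f v = if h : T.isTerminal v then f ⟨v, h⟩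
      else T.extCoeff f (T.child v 0) - T.extCoeff f (T.child v 1)
        + T.extCoeff f (T.child v 2) := by
  rw [extCoeff, WellFounded.fix_eq]

lemma extCoeff_terminal (f : T.Tinf → ℤ) (w : T.Tinf) : T.extCoeff f w.1 = f w := by
  rw [extCoeff_eq, dif_pos w.2]

lemma cyc_extCoeff (f : T.Tinf → ℤ) : T.cyc (T.extCoeff f) := by
  intro v hv
  rw [extCoeff_eq, dif_neg hv]

/-- uniqueness of the extension, by well-founded induction from below -/
lemma ext_unique (j j' : T.V → ℤ) (hterm : ∀ w : T.Tinf, j w.1 = j' w.1)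
    (hj : T.cyc j) (hj' : T.cyc j') : j = j' := by
  funext v
  induction v using ((wellFounded_lt (α := T.V)).induction) with
  | _ v ih =>
    by_cases h : T.isTerminal v
    · exact hterm ⟨v, h⟩
    · rw [hj v h, hj' v h,
        ih _ ((T.child_covby v h 0).lt), ih _ ((T.child_covby v h 1).lt),
        ih _ ((T.child_covby v h 2).lt)]

lemma child_lt (v : T.T0) (i : Fin 3) : T.child v.1 i < v.1 :=
  (T.child_covby v.1 v.2 i).lt

lemma child_ne_root (v : T.T0) (i : Fin 3) : T.child v.1 i ≠ T.root :=
  fun h => absurd (lt_of_lt_of_le (T.child_lt v i) (T.le_root v.1)) (h ▸ lt_irrefl _)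

/-- uniqueness of the parent -/
lemma parent_unique (v v' : T.T0) (i i' : Fin 3)
    (h : T.child v.1 i = T.child v'.1 i') : v = v' ∧ i = i' := by
  have h1 : T.child v.1 i ⋖ v.1 := T.child_covby v.1 v.2 i
  have h2 : T.child v.1 i ⋖ v'.1 := h ▸ T.child_covby v'.1 v'.2 i'
  have hcomp := T.chainCond T.root v.1 v'.1 (T.child v.1 i)
    h1.le (T.le_root _) h2.le (T.le_root _)
  have hvv : v.1 = v'.1 := by
    rcases hcomp with hc | hc
    · rcases lt_or_eq_of_le hc with hc | hc
      · exact absurd hc (h2.2 h1.lt)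
      · exact hc
    · rcases lt_or_eq_of_le hc with hc | hc
      · exact absurd hc (h1.2 h2.lt)
      · exact hc.symm
  have hv : v = v' := Subtype.ext hvv
  subst hv
  exact ⟨rfl, T.child_inj v.1 v.2 h⟩

lemma exists_parent (w : T.V) (hw : w ≠ T.root) :
    ∃ p : T.T0 × Fin 3, w = T.child p.1.1 p.2 := by
  have hlt : w < T.root := lt_of_le_of_ne (T.le_root w) hw
  have hmax : ¬ IsMax w := fun hm => absurd (hm hlt.le) hlt.not_ge
  obtain ⟨v, hcov⟩ := exists_covBy_of_wellFoundedLT hmax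
  have hvt : ¬ T.isTerminal v := fun ht => T.terminal_min v ht w hcov.lt
  obtain ⟨i, hi⟩ := T.covby_child v w hvt hcov
  exact ⟨⟨⟨v, hvt⟩, i⟩, hi⟩

noncomputable def par (w : T.V) (hw : w ≠ T.root) : T.T0 × Fin 3 :=
  (T.exists_parent w hw).choose

lemma par_spec (w : T.V) (hw : w ≠ T.root) :
    w = T.child (T.par w hw).1.1 (T.par w hw).2 :=
  (T.exists_parent w hw).choose_spec

lemma lt_par (w : T.V) (hw : w ≠ T.root) : w < (T.par w hw).1.1 := by
  conv_lhs => rw [T.par_spec w hw]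
  exact T.child_lt _ _

lemma par_eq (v : T.T0) (i : Fin 3) (hw : T.child v.1 i ≠ T.root) :
    T.par (T.child v.1 i) hw = (v, i) := by
  obtain ⟨h1, h2⟩ := T.parent_unique _ v _ i (T.par_spec (T.child v.1 i) hw).symm
  exact Prod.ext h1 h2

/-- top-down reconstruction from the root value and the differences -/
noncomputable def invExt (a : ℤ) (k : T.T0 × Fin 2 → ℤ) : T.V → ℤ :=
  (wellFounded_gt (α := T.V)).fix fun w ih =>
    if hw : w = T.root then a
    else
      let gv := ih (T.par w hw).1.1 (T.lt_par w hw)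
      if (T.par w hw).2 = 0 then gv - k ((T.par w hw).1, 0)
      else if (T.par w hw).2 = 2 then gv - k ((T.par w hw).1, 1)
      else gv - k ((T.par w hw).1, 0) - k ((T.par w hw).1, 1)

lemma invExt_root (a : ℤ) (k : T.T0 × Fin 2 → ℤ) : T.invExt a k T.root = a := by
  rw [invExt, WellFounded.fix_eq, dif_pos rfl]

lemma invExt_eq (a : ℤ) (k : T.T0 × Fin 2 → ℤ) (w : T.V) :
    T.invExt a k w = if hw : w = T.root then a
      else if (T.par w hw).2 = 0 then
        T.invExt a k (T.par w hw).1.1 - k ((T.par w hw).1, 0)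
      else if (T.par w hw).2 = 2 then
        T.invExt a k (T.par w hw).1.1 - k ((T.par w hw).1, 1)
      else T.invExt a k (T.par w hw).1.1 - k ((T.par w hw).1, 0)
        - k ((T.par w hw).1, 1) := by
  rw [invExt, WellFounded.fix_eq]

lemma invExt_child (a : ℤ) (k : T.T0 × Fin 2 → ℤ) (v : T.T0) (i : Fin 3) :
    T.invExt a k (T.child v.1 i) =
      if i = 0 then T.invExt a k v.1 - k (v, 0)
      else if i = 2 then T.invExt a k v.1 - k (v, 1)
      else T.invExt a k v.1 - k (v, 0) - k (v, 1) := by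
  rw [T.invExt_eq a k (T.child v.1 i), dif_neg (T.child_ne_root v i),
    T.par_eq v i (T.child_ne_root v i)]

lemma cyc_invExt (a : ℤ) (k : T.T0 × Fin 2 → ℤ) : T.cyc (T.invExt a k) := by
  intro v hv
  have h0 := T.invExt_child a k ⟨v, hv⟩ 0
  have h1 := T.invExt_child a k ⟨v, hv⟩ 1
  have h2 := T.invExt_child a k ⟨v, hv⟩ 2
  rw [if_pos rfl] at h0
  rw [if_neg (by decide), if_neg (by decide)] at h1
  rw [if_neg (by decide), if_pos rfl] at h2
  rw [h0, h1, h2]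
  ring

/-- top-down uniqueness given root value and differences -/
lemma down_unique (g g' : T.V → ℤ) (hroot : g T.root = g' T.root)
    (hk : ∀ v : T.T0, ∀ i : Fin 3, i ≠ 1 →
      g v.1 - g (T.child v.1 i) = g' v.1 - g' (T.child v.1 i))
    (hg : T.cyc g) (hg' : T.cyc g') : g = g' := by
  funext w
  induction w using ((wellFounded_gt (α := T.V)).induction) with
  | _ w ih =>
    by_cases hw : w = T.root
    · rw [hw]; exact hroot
    · obtain ⟨⟨v, i⟩, hvi'⟩ := T.exists_parent w hw
      have hvi : w = T.child v.1 i := hvi'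
      have hv : g v.1 = g' v.1 := ih v.1 (hvi ▸ T.child_lt v i)
      have key : ∀ j : Fin 3, j ≠ 1 → g (T.child v.1 j) = g' (T.child v.1 j) := by
        intro j hj
        have := hk v j hj
        omega
      by_cases hi : i = 1
      · subst hi; rw [hvi]
        have hc := hg v.1 v.2
        have hc' := hg' v.1 v.2
        have k0 := key 0 (by decide)
        have k2 := key 2 (by decide)
        omega
      · rw [hvi]; exact key i hi

/-- the fundamental counting equivalence -/
noncomputable def nodeEquiv : Unit ⊕ (T.T0 × Fin 3) ≃ T.V where
  toFun := Sum.elim (fun _ => T.root) (fun p => T.child p.1.1 p.2)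
  invFun := fun w => if hw : w = T.root then Sum.inl () else Sum.inr (T.par w hw)
  left_inv := by
    rintro (⟨⟩ | ⟨v, i⟩)
    · simp
    · simp only [Sum.elim_inr]
      simp only [dif_neg (T.child_ne_root v i), T.par_eq v i (T.child_ne_root v i)]
  right_inv := by
    intro w
    by_cases hw : w = T.root
    · simp [hw]
    · simp only [dif_neg hw, Sum.elim_inr]
      exact (T.par_spec w hw).symm

lemma card_V : Fintype.card T.V = 1 + 3 * Fintype.card T.T0 := by
  rw [← Fintype.card_congr T.nodeEquiv]
  simp [Fintype.card_prod]
  ring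

lemma card_Tinf : Fintype.card T.Tinf = 1 + 2 * Fintype.card T.T0 := by
  have h1 : Fintype.card T.Tinf + Fintype.card T.T0 = Fintype.card T.V := by
    rw [← Fintype.card_sum]
    exact Fintype.card_congr (Equiv.sumCompl T.isTerminal)
  have h2 := T.card_V
  omega

end Tree3

/-- Every tuple indexed by terminal nodes extends uniquely to a tuple on all of `T`
satisfying the relations `j_v = j_{(v,1)} − j_{(v,2)} + j_{(v,3)}`; the set
`B = {v₀} ∪ {(v,i) : v ∈ T⁰, i ∈ {1,3}}` has the same cardinality as `T^∞`; and the
ℤ-linear map `L` sending `(j_w)_{w∈T^∞}` to `(j_{v₀}, (k_{v,i})_{v∈T⁰, i∈{1,3}})`,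
where `k_{v,i} = j_v − j_{(v,i)}` is computed from the unique extension, is a bijection. -/
theorem statement9 (T : Tree3) :
    (∀ f : T.Tinf → ℤ, ∃! j : T.V → ℤ, (∀ w : T.Tinf, j w.1 = f w) ∧ T.cyc j) ∧
    (({T.root} ∪ Finset.image
        (fun p : T.T0 × Fin 2 => T.child p.1.1 (if p.2 = 0 then 0 else 2))
        Finset.univ : Finset T.V).card = Fintype.card T.Tinf) ∧
    Function.Bijective
      (fun f : T.Tinf → ℤ =>
        (Sum.elim (fun _ : Unit => T.extCoeff f T.root)
          (fun p : T.T0 × Fin 2 =>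
            T.extCoeff f p.1.1 - T.extCoeff f (T.child p.1.1 (if p.2 = 0 then 0 else 2)))
          : Unit ⊕ (T.T0 × Fin 2) → ℤ)) := by
  refine ⟨?_, ?_, ?_, ?_⟩
  · -- unique extension
    intro f
    refine ⟨T.extCoeff f, ⟨T.extCoeff_terminal f, T.cyc_extCoeff f⟩, ?_⟩
    rintro j ⟨hterm, hcyc⟩
    exact T.ext_unique j (T.extCoeff f)
      (fun w => by rw [hterm w, T.extCoeff_terminal]) hcyc (T.cyc_extCoeff f)
  · -- cardinality
    have hinj : Function.Injective
        (fun p : T.T0 × Fin 2 => T.child p.1.1 (if p.2 = 0 then 0 else 2)) := by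
      rintro ⟨v, i⟩ ⟨v', i'⟩ h
      obtain ⟨h1, h2⟩ := T.parent_unique v v' _ _ h
      subst h1
      refine Prod.ext rfl ?_
      fin_cases i <;> fin_cases i' <;> simp_all
    have hroot : T.root ∉ Finset.image
        (fun p : T.T0 × Fin 2 => T.child p.1.1 (if p.2 = 0 then 0 else 2))
        Finset.univ := by
      simp only [Finset.mem_image, Finset.mem_univ, true_and, not_exists]
      rintro ⟨v, i⟩
      exact fun h => T.child_ne_root v _ h
    rw [Finset.union_comm, Finset.card_union_of_disjoint (by
      simp only [Finset.disjoint_singleton_right]; exact hroot),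
      Finset.card_image_of_injective _ hinj]
    rw [Finset.card_univ, Fintype.card_prod, Fintype.card_fin,
      Finset.card_singleton, T.card_Tinf]
    ring
  · -- injective
    intro f f' h
    have hroot : T.extCoeff f T.root = T.extCoeff f' T.root :=
      congrFun h (Sum.inl ())
    have hk : ∀ v : T.T0, ∀ i : Fin 3, i ≠ 1 →
        T.extCoeff f v.1 - T.extCoeff f (T.child v.1 i)
          = T.extCoeff f' v.1 - T.extCoeff f' (T.child v.1 i) := by
      intro v i hi
      fin_cases i
      · have := congrFun h (Sum.inr (v, 0)); simpa using this
      · exact absurd rfl hi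
      · have := congrFun h (Sum.inr (v, 1)); simpa using this
    have := T.down_unique (T.extCoeff f) (T.extCoeff f') hroot hk
      (T.cyc_extCoeff f) (T.cyc_extCoeff f')
    funext w
    rw [← T.extCoeff_terminal f w, ← T.extCoeff_terminal f' w, this]
  · -- surjective
    intro h
    refine ⟨fun w => T.invExt (h (Sum.inl ()))
      (fun p => h (Sum.inr p)) w.1, ?_⟩
    have hext : T.extCoeff (fun w : T.Tinf =>
          T.invExt (h (Sum.inl ())) (fun p => h (Sum.inr p)) w.1)
        = T.invExt (h (Sum.inl ())) (fun p => h (Sum.inr p)) :=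
      T.ext_unique _ _ (fun w => T.extCoeff_terminal _ w)
        (T.cyc_extCoeff _) (T.cyc_invExt _ _)
    have key : ∀ (v : T.T0) (i : Fin 2),
        T.invExt (h (Sum.inl ())) (fun p => h (Sum.inr p)) v.1
          - T.invExt (h (Sum.inl ())) (fun p => h (Sum.inr p))
              (T.child v.1 (if i = 0 then 0 else 2))
        = (fun p => h (Sum.inr p)) (v, i) := by
      intro v i
      by_cases hi : i = 0
      · subst hi
        rw [if_pos rfl]
        have h0 := T.invExt_child (h (Sum.inl ())) (fun p => h (Sum.inr p)) v 0
        rw [if_pos rfl] at h0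
        rw [h0]; ring
      · have hi1 : i = 1 := by
          have h2 := i.is_lt
          have h0 : i.val ≠ 0 := fun h' => hi (Fin.ext h')
          exact Fin.ext (by omega)
        subst hi1
        rw [if_neg (by decide)]
        have h2 := T.invExt_child (h (Sum.inl ())) (fun p => h (Sum.inr p)) v 2
        rw [if_neg (by decide), if_pos rfl] at h2
        rw [h2]; ring
    funext x
    rcases x with ⟨⟩ | ⟨v, i⟩
    · simp only [Sum.elim_inl, hext, T.invExt_root]
    · simp only [Sum.elim_inr, hext]
      exact key v i
end

section
/- Let T be an ornamented tree with root v₀, equipped with signs ±_u ∈ {+1,−1} and ω ∈ {+1,−1}. Then for every t ∈ [0,1] and all sequences y_w ∈ ℓ¹(ℤ) (w ∈ T^∞): Σ_{n∈ℤ} Σ_{j∈J(T), j_{v₀}=n} |I_T(t,j)| ∏_{w∈T^∞} |y_w(j_w)| ≤ t^{|T⁰|} ∏_{w∈T^∞} ‖y_w‖_{ℓ¹(ℤ)}; in particular the sum defining the tree operator S_T(t)((y_w))(n) = Σ_{j∈J(T), j_{v₀}=n} I_T(t,j) ∏_{w∈T^∞} y_w(j_w) converges absolutely for every n, and ‖S_T(t)((y_w))‖_{ℓ¹(ℤ)}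 ≤ t^{|T⁰|} ∏_{w∈T^∞} ‖y_w‖_{ℓ¹(ℤ)}. -/
open MeasureTheory

open scoped ENNReal NNReal

lemma tsum_pi_finprod : ∀ (ι : Type) [Finite ι] (g : ι → ℤ → ℝ≥0∞),
    ∑' f : ι → ℤ, ∏ᶠ i, g i (f i) = ∏ᶠ i, ∑' k, g i k := by
  intro ι hι
  refine Finite.induction_empty_option (P := fun α => ∀ g : α → ℤ → ℝ≥0∞,
      ∑' f : α → ℤ, ∏ᶠ i, g i (f i) = ∏ᶠ i, ∑' k, g i k) ?_ ?_ ?_ ι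
  · intro α β e ih g
    calc ∑' f : β → ℤ, ∏ᶠ i : β, g i (f i)
        = ∑' f : α → ℤ, ∏ᶠ i : β, g i ((Equiv.piCongrLeft' (fun _ => ℤ) e) f i) :=
          ((Equiv.piCongrLeft' (fun _ => ℤ) e).tsum_eq _).symm
      _ = ∑' f : α → ℤ, ∏ᶠ i : α, g (e i) (f i) := by
          refine tsum_congr fun f => ?_
          rw [← finprod_comp_equiv e]
          refine finprod_congr fun i => ?_
          simp [Equiv.piCongrLeft'_apply]
      _ = ∏ᶠ i : α, ∑' k, g (e i) k := ih _
      _ = ∏ᶠ i : β, ∑' k, g i k := finprod_comp_equiv e (f := fun i => ∑' k, g i k)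
  · intro g
    simp only [finprod_of_isEmpty]
    exact tsum_eq_single default fun b hb => absurd (Subsingleton.elim b default) hb
  · intro α _ ih g
    classical
    let e := (Equiv.piOptionEquivProd (β := fun _ : Option α => ℤ)).symm
    have hfin : ∀ (h : Option α → ℝ≥0∞), ∏ᶠ i, h i = h none * ∏ᶠ a : α, h (some a) := by
      intro h
      rw [finprod_eq_prod_of_fintype, finprod_eq_prod_of_fintype, Fintype.prod_option]
    calc ∑' f : Option α → ℤ, ∏ᶠ i, g i (f i)
        = ∑' p : ℤ × (α → ℤ), ∏ᶠ i : Option α, g i (e p i) := (e.tsum_eq _).symm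
      _ = ∑' p : ℤ × (α → ℤ), g none p.1 * ∏ᶠ a : α, g (some a) (p.2 a) := by
          refine tsum_congr fun p => ?_
          rw [hfin]
          rfl
      _ = ∑' k : ℤ, ∑' f : α → ℤ, g none k * ∏ᶠ a : α, g (some a) (f a) := ENNReal.tsum_prod'
      _ = (∑' k : ℤ, g none k) * ∑' f : α → ℤ, ∏ᶠ a : α, g (some a) (f a) := by
          simp_rw [ENNReal.tsum_mul_left]
          rw [ENNReal.tsum_mul_right]
      _ = (∑' k : ℤ, g none k) * ∏ᶠ a : α, ∑' k, g (some a) k := by rw [ih]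
      _ = ∏ᶠ i : Option α, ∑' k, g i k := (hfin (fun i => ∑' k, g i k)).symm

lemma tsum_pi_prod (ι : Type) [Fintype ι] (g : ι → ℤ → ℝ≥0∞) :
    ∑' f : ι → ℤ, ∏ i, g i (f i) = ∏ i, ∑' k, g i k := by
  have := tsum_pi_finprod ι g
  simpa [finprod_eq_prod_of_fintype] using this

open MeasureTheory in
lemma Tree3.cyc_ext (T : Tree3) {j1 j2 : T.V → ℤ} (h1 : T.cyc j1) (h2 : T.cyc j2)
    (h : ∀ w : T.Tinf, j1 w.1 = j2 w.1) : j1 = j2 := by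
  funext v
  refine (wellFounded_lt (α := T.V)).induction (C := fun v => j1 v = j2 v) v ?_
  intro v ih
  by_cases hterm : T.isTerminal v
  · exact h ⟨v, hterm⟩
  · rw [h1 v hterm, h2 v hterm,
      ih _ ((T.child_covby v hterm 0).lt),
      ih _ ((T.child_covby v hterm 1).lt),
      ih _ ((T.child_covby v hterm 2).lt)]

open MeasureTheory in
lemma Tree3.treeCoeff_norm_le (T : Tree3) (pm : T.V → ℤ) (ω : ℤ) (j : T.V → ℤ)
    {t : ℝ} (ht : 0 ≤ t) :
    ‖T.treeCoeff pm ω j t‖ ≤ t ^ Fintype.card T.T0 := by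
  have hsub : T.RSet t ⊆ Set.pi Set.univ (fun _ : T.T0 => Set.Icc 0 t) := by
    intro f hf u _
    obtain ⟨a, b, c⟩ := hf u u le_rfl
    exact ⟨a, c⟩
  have hvol : volume (T.RSet t) ≤ ENNReal.ofReal t ^ Fintype.card T.T0 := by
    refine le_trans (measure_mono hsub) ?_
    rw [volume_pi_pi]
    simp [Real.volume_Icc]
  have hnorm : ∀ f : T.T0 → ℝ, ‖∏ u : T.T0,
      Complex.exp ((pm u.1 : ℂ) * Complex.I * (ω : ℂ) * (T.sigmaJ j u.1 : ℂ) * (f u : ℂ))‖ = 1 := by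
    intro f
    rw [norm_prod]
    refine Finset.prod_eq_one fun u _ => ?_
    have hz : (pm u.1 : ℂ) * Complex.I * (ω : ℂ) * (T.sigmaJ j u.1 : ℂ) * (f u : ℂ)
        = ((((pm u.1 * ω * T.sigmaJ j u.1 : ℤ) : ℝ) * f u : ℝ) : ℂ) * Complex.I := by
      push_cast; ring
    rw [hz, Complex.norm_exp_ofReal_mul_I]
  calc ‖T.treeCoeff pm ω j t‖
      ≤ ∫ f in T.RSet t, ‖∏ u : T.T0,
          Complex.exp ((pm u.1 : ℂ) * Complex.I * (ω : ℂ) * (T.sigmaJ j u.1 : ℂ) * (f u : ℂ))‖ :=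
        norm_integral_le_integral_norm _
    _ = ∫ _f in T.RSet t, (1 : ℝ) := by simp only [hnorm]
    _ = (volume (T.RSet t)).toReal := by simp [setIntegral_const, Measure.real]
    _ ≤ (ENNReal.ofReal t ^ Fintype.card T.T0).toReal :=
        ENNReal.toReal_mono (by simp [ENNReal.pow_ne_top]) hvol
    _ = t ^ Fintype.card T.T0 := by
        rw [ENNReal.toReal_pow, ENNReal.toReal_ofReal ht]

def rootSigmaEquiv (T : Tree3) (isSimple : T.V → Prop) :
    {j : T.V → ℤ // T.memJ isSimple j} ≃
      (Σ n : ℤ, {j : T.V → ℤ // T.memJ isSimple j ∧ j T.root = n}) where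
  toFun j := ⟨j.1 T.root, ⟨j.1, j.2, rfl⟩⟩
  invFun p := ⟨p.2.1, p.2.2.1⟩
  left_inv j := rfl
  right_inv p := by rcases p with ⟨n, j, hj, rfl⟩; rfl


/-- ℓ¹ bound for tree operators: for `t ∈ [0,1]` and `ℓ¹` sequences `y_w`,
`Σ_n Σ_{j∈J(T), j_{v₀}=n} |I_T(t,j)| ∏_w |y_w(j_w)| ≤ t^{|T⁰|} ∏_w ‖y_w‖_{ℓ¹}`;
in particular the sum defining `S_T(t)((y_w))(n)` converges absolutely for every `n`
and `‖S_T(t)((y_w))‖_{ℓ¹} ≤ t^{|T⁰|} ∏_w ‖y_w‖_{ℓ¹}`. -/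
theorem statement15 (T : Tree3) (isSimple : T.V → Prop)
    (pm : T.V → ℤ) (hpm : ∀ v : T.V, pm v = 1 ∨ pm v = -1)
    (ω : ℤ) (hω : ω = 1 ∨ ω = -1)
    (t : ℝ) (ht : t ∈ Set.Icc (0 : ℝ) 1)
    (y : T.Tinf → ℤ → ℂ) (hy : ∀ w : T.Tinf, Summable fun k : ℤ => ‖y w k‖) :
    ((∑' n : ℤ, ∑' j : {j : T.V → ℤ // T.memJ isSimple j ∧ j T.root = n},
          ‖T.treeCoeff pm ω j.1 t‖ * ∏ w : T.Tinf, ‖y w (j.1 w.1)‖)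
        ≤ t ^ (Fintype.card T.T0) * ∏ w : T.Tinf, ∑' k : ℤ, ‖y w k‖) ∧
    (∀ n : ℤ, Summable fun j : {j : T.V → ℤ // T.memJ isSimple j ∧ j T.root = n} =>
        ‖T.treeCoeff pm ω j.1 t * ∏ w : T.Tinf, y w (j.1 w.1)‖) ∧
    ((∑' n : ℤ, ‖∑' j : {j : T.V → ℤ // T.memJ isSimple j ∧ j T.root = n},
          T.treeCoeff pm ω j.1 t * ∏ w : T.Tinf, y w (j.1 w.1)‖)
        ≤ t ^ (Fintype.card T.T0) * ∏ w : T.Tinf, ∑' k : ℤ, ‖y w k‖) := by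
  classical
  obtain ⟨ht0, -⟩ := ht
  set C : ℝ := t ^ Fintype.card T.T0 with hCdef
  have hC0 : 0 ≤ C := pow_nonneg ht0 _
  set Y : T.Tinf → ℤ → ℝ≥0∞ := fun w k => (‖y w k‖₊ : ℝ≥0∞) with hYdef
  set G' : {j : T.V → ℤ // T.memJ isSimple j} → ℝ≥0∞ :=
    fun j => (‖T.treeCoeff pm ω j.1 t‖₊ : ℝ≥0∞) * ∏ w : T.Tinf, Y w (j.1 w.1) with hG'def
  have hrinj : Function.Injective
      (fun (j : {j : T.V → ℤ // T.memJ isSimple j}) (w : T.Tinf) => j.1 w.1) := by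
    intro j1 j2 h
    exact Subtype.ext (Tree3.cyc_ext T j1.2.1 j2.2.1 fun w => congrFun h w)
  have hcoeff : ∀ j : {j : T.V → ℤ // T.memJ isSimple j},
      (‖T.treeCoeff pm ω j.1 t‖₊ : ℝ≥0∞) ≤ ENNReal.ofReal C := by
    intro j
    rw [← enorm_eq_nnnorm, ← ofReal_norm]
    exact ENNReal.ofReal_le_ofReal (Tree3.treeCoeff_norm_le T pm ω j.1 ht0)
  have hmaster : ∑' j : {j : T.V → ℤ // T.memJ isSimple j}, G' j
      ≤ ENNReal.ofReal C * ∏ w : T.Tinf, ∑' k : ℤ, Y w k := by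
    calc ∑' j, G' j
        ≤ ∑' j : {j : T.V → ℤ // T.memJ isSimple j},
            ENNReal.ofReal C * ∏ w : T.Tinf, Y w (j.1 w.1) :=
          ENNReal.tsum_le_tsum fun j => mul_le_mul_left (hcoeff j) _
      _ = ENNReal.ofReal C * ∑' j : {j : T.V → ℤ // T.memJ isSimple j},
            ∏ w : T.Tinf, Y w (j.1 w.1) := ENNReal.tsum_mul_left
      _ ≤ ENNReal.ofReal C * ∑' f : T.Tinf → ℤ, ∏ w : T.Tinf, Y w (f w) :=
          mul_le_mul_right (ENNReal.tsum_comp_le_tsum_of_injective hrinj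
            (fun f => ∏ w : T.Tinf, Y w (f w))) _
      _ = ENNReal.ofReal C * ∏ w : T.Tinf, ∑' k : ℤ, Y w k := by
          rw [tsum_pi_prod]
  set B : ℝ := C * ∏ w : T.Tinf, ∑' k : ℤ, ‖y w k‖ with hBdef
  have hyt : ∀ w : T.Tinf, (0:ℝ) ≤ ∑' k : ℤ, ‖y w k‖ :=
    fun w => tsum_nonneg fun k => norm_nonneg _
  have hB0 : 0 ≤ B := mul_nonneg hC0 (Finset.prod_nonneg fun w _ => hyt w)
  have hRB : ENNReal.ofReal C * ∏ w : T.Tinf, ∑' k : ℤ, Y w k = ENNReal.ofReal B := by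
    have h1 : ∀ w : T.Tinf, ∑' k : ℤ, Y w k = ENNReal.ofReal (∑' k : ℤ, ‖y w k‖) := by
      intro w
      rw [ENNReal.ofReal_tsum_of_nonneg (fun k => norm_nonneg _) (hy w)]
      exact tsum_congr fun k => (ofReal_norm _).symm
    simp_rw [h1]
    rw [← ENNReal.ofReal_prod_of_nonneg fun w _ => hyt w, ← ENNReal.ofReal_mul hC0]
  have hne : (∑' j : {j : T.V → ℤ // T.memJ isSimple j}, G' j) ≠ ⊤ :=
    ((hmaster.trans hRB.le).trans_lt ENNReal.ofReal_lt_top).ne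
  have hfin : ∀ j, G' j ≠ ⊤ := fun j => ne_top_of_le_ne_top hne (ENNReal.le_tsum j)
  set G : {j : T.V → ℤ // T.memJ isSimple j} → ℝ :=
    fun j => ‖T.treeCoeff pm ω j.1 t‖ * ∏ w : T.Tinf, ‖y w (j.1 w.1)‖ with hGdef
  have hGG' : ∀ j, G j = (G' j).toReal := by
    intro j
    rw [hG'def, ENNReal.toReal_mul, ENNReal.toReal_prod]
    simp [hGdef, hYdef]
  have hGsum : Summable G := (ENNReal.summable_toReal hne).congr fun j => (hGG' j).symm
  have hGle : ∑' j, G j ≤ B := by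
    calc ∑' j, G j = (∑' j, G' j).toReal := by
          rw [ENNReal.tsum_toReal_eq hfin]; exact tsum_congr hGG'
      _ ≤ (ENNReal.ofReal B).toReal :=
          ENNReal.toReal_mono ENNReal.ofReal_ne_top (hmaster.trans hRB.le)
      _ = B := ENNReal.toReal_ofReal hB0
  let E : {j : T.V → ℤ // T.memJ isSimple j} ≃
      (Σ n : ℤ, {j : T.V → ℤ // T.memJ isSimple j ∧ j T.root = n}) :=
    rootSigmaEquiv T isSimple
  have hsig : Summable fun p : (Σ n : ℤ, {j : T.V → ℤ // T.memJ isSimple j ∧ j T.root = n}) =>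
      G (E.symm p) := hGsum.comp_injective E.symm.injective
  have hsiginner : ∀ n : ℤ, ∀ j : {j : T.V → ℤ // T.memJ isSimple j ∧ j T.root = n},
      G (E.symm ⟨n, j⟩) = ‖T.treeCoeff pm ω j.1 t‖ * ∏ w : T.Tinf, ‖y w (j.1 w.1)‖ :=
    fun n j => rfl
  have htot : ∑' p, G (E.symm p) = ∑' j, G j := E.symm.tsum_eq G
  refine ⟨?_, ?_, ?_⟩
  · calc ∑' n : ℤ, ∑' j : {j : T.V → ℤ // T.memJ isSimple j ∧ j T.root = n},
          ‖T.treeCoeff pm ω j.1 t‖ * ∏ w : T.Tinf, ‖y w (j.1 w.1)‖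
        = ∑' n : ℤ, ∑' j : {j : T.V → ℤ // T.memJ isSimple j ∧ j T.root = n},
            G (E.symm ⟨n, j⟩) := by
          exact tsum_congr fun n => tsum_congr fun j => (hsiginner n j).symm
      _ = ∑' p, G (E.symm p) := (hsig.tsum_sigma).symm
      _ = ∑' j, G j := htot
      _ ≤ B := hGle
  · intro n
    refine (hsig.sigma_factor n).congr fun j => ?_
    rw [hsiginner n j, norm_mul, norm_prod]
  · have key2 : ∀ n : ℤ, Summable fun j : {j : T.V → ℤ // T.memJ isSimple j ∧ j T.root = n} =>
        ‖T.treeCoeff pm ω j.1 t * ∏ w : T.Tinf, y w (j.1 w.1)‖ := by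
      intro n
      refine (hsig.sigma_factor n).congr fun j => ?_
      rw [hsiginner n j, norm_mul, norm_prod]
    have hinner_le : ∀ n : ℤ,
        ‖∑' j : {j : T.V → ℤ // T.memJ isSimple j ∧ j T.root = n},
          T.treeCoeff pm ω j.1 t * ∏ w : T.Tinf, y w (j.1 w.1)‖
        ≤ ∑' j : {j : T.V → ℤ // T.memJ isSimple j ∧ j T.root = n}, G (E.symm ⟨n, j⟩) := by
      intro n
      refine (norm_tsum_le_tsum_norm (key2 n)).trans_eq ?_
      exact tsum_congr fun j => by rw [hsiginner n j, norm_mul, norm_prod]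
    have hsumout : Summable fun n : ℤ =>
        ∑' j : {j : T.V → ℤ // T.memJ isSimple j ∧ j T.root = n}, G (E.symm ⟨n, j⟩) :=
      hsig.sigma
    have hsumnorm : Summable fun n : ℤ =>
        ‖∑' j : {j : T.V → ℤ // T.memJ isSimple j ∧ j T.root = n},
          T.treeCoeff pm ω j.1 t * ∏ w : T.Tinf, y w (j.1 w.1)‖ :=
      Summable.of_nonneg_of_le (fun n => norm_nonneg _) hinner_le hsumout
    calc ∑' n : ℤ, ‖∑' j : {j : T.V → ℤ // T.memJ isSimple j ∧ j T.root = n},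
          T.treeCoeff pm ω j.1 t * ∏ w : T.Tinf, y w (j.1 w.1)‖
        ≤ ∑' n : ℤ, ∑' j : {j : T.V → ℤ // T.memJ isSimple j ∧ j T.root = n},
            G (E.symm ⟨n, j⟩) := hsumnorm.tsum_le_tsum hinner_le hsumout
      _ = ∑' p, G (E.symm p) := (hsig.tsum_sigma).symm
      _ = ∑' j, G j := htot
      _ ≤ B := hGle
end
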